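/- Main theorem for ℜ: for every formula φ of 𝓛, the following three statements are equivalent: (1) φ is a tautology of the standard enumeration ζ of nondeterministic partial recursive functions; (2) w ⊩ φ for every world w of every Kripke model; (3) ⊢_ℜ φ. -/

import Mathlib

/-- Formulas of the modal language 𝓛: propositional variables, ⊥, →, and ▷. -/
inductive Formula : Type
  | var : ℕ → Formula
  | bot : Formula
  | imp : Formula → Formula → Formula
  | tri : Formula → Formula → Formula
deriving DecidableEq

namespace Formula

/-- ¬φ := φ → ⊥ -/
def neg (φ : Formula) : Formula := imp φ bot
/-- ⊤ := ¬⊥ -/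
def top : Formula := neg bot
/-- φ ∨ ψ := ¬φ → ψ -/
def disj (φ ψ : Formula) : Formula := imp (neg φ) ψ
/-- φ ∧ ψ := ¬(φ → ¬ψ) -/
def conj (φ ψ : Formula) : Formula := neg (imp φ (neg ψ))

/-- `φ` is a substitution instance of a classical propositional tautology:
it evaluates to `true` under every boolean valuation of formulas that
respects `⊥` and `→` (variables and `▷`-formulas are treated as atoms). -/
def IsPropTaut (φ : Formula) : Prop :=
  ∀ v : Formula → Bool, v bot = false →
    (∀ a b, v (imp a b) = (!(v a) || v b)) → v φ = true

/-- Hilbert-style provability.  `Prv false` is the logic ℜ (axioms: classical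
tautologies, A1, A2, A3; rules: Modus Ponens and monotonicity M);
`Prv true` is the logic ℜ_d, which additionally has axiom A4. -/
inductive Prv : Bool → Formula → Prop
  | taut {d : Bool} {φ} : IsPropTaut φ → Prv d φ
  | a1 {d : Bool} (φ ψ χ) : Prv d (imp (tri φ ψ) (imp (tri χ ψ) (tri (disj φ χ) ψ)))
  | a2 {d : Bool} (φ) : Prv d (tri bot φ)
  | a3 {d : Bool} (φ) : Prv d (tri φ top)
  | a4 (φ ψ χ) : Prv true (imp (tri φ ψ) (imp (tri φ χ) (tri φ (conj ψ χ))))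
  | mp {d : Bool} {φ ψ} : Prv d (imp φ ψ) → Prv d φ → Prv d ψ
  | mono {d : Bool} {φ₁ φ₂ ψ₁ ψ₂} : Prv d (imp φ₁ φ₂) → Prv d (imp ψ₁ ψ₂) →
      Prv d (imp (tri φ₂ ψ₁) (tri φ₁ ψ₂))

/-- `Deriv d Δ φ`: φ is derivable from the hypotheses Δ together with all
theorems of the logic (`Prv d`) using only Modus Ponens. -/
inductive Deriv (d : Bool) (Δ : Set Formula) : Formula → Prop
  | hyp {φ} : φ ∈ Δ → Deriv d Δ φ
  | thm {φ} : Prv d φ → Deriv d Δ φ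
  | mp {φ ψ} : Deriv d Δ (imp φ ψ) → Deriv d Δ φ → Deriv d Δ ψ

/-- Conjunction of a list of formulas (empty conjunction is ⊤). -/
def conjList : List Formula → Formula
  | [] => top
  | φ :: l => conj φ (conjList l)

/-- ⋀Γ : conjunction of all formulas of a finite set Γ (⋀∅ = ⊤). -/
noncomputable def bigConj (Γ : Finset Formula) : Formula := conjList Γ.toList

/-- A set of formulas is consistent if ⊥ is not derivable from it. -/
def Consistent (d : Bool) (Δ : Set Formula) : Prop := ¬ Deriv d Δ bot

/-- The pair (u,v) is w-consistent: w ⊬ ⋀u ▷ ¬⋀v. -/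
def WCons (d : Bool) (w : Set Formula) (u v : Finset Formula) : Prop :=
  ¬ Deriv d w (tri (bigConj u) (neg (bigConj v)))

/-- The operation ∼: ∼(¬φ) = φ, and ∼φ = ¬φ if φ is not a negation. -/
def simNeg : Formula → Formula
  | imp φ bot => φ
  | φ => neg φ

/-- Φ is closed under subformulas. -/
def SubClosed (Φ : Finset Formula) : Prop :=
  (∀ a b, imp a b ∈ Φ → a ∈ Φ ∧ b ∈ Φ) ∧ (∀ a b, tri a b ∈ Φ → a ∈ Φ ∧ b ∈ Φ)

/-- Φ is closed under the operation ∼. -/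
def SimClosed (Φ : Finset Formula) : Prop := ∀ φ ∈ Φ, simNeg φ ∈ Φ

/-- w is a maximal consistent subset of Φ: w ⊆ Φ, w is consistent, and for
every φ ∈ Φ either φ ∈ w or ∼φ ∈ w. -/
def MaxCons (d : Bool) (Φ : Finset Formula) (w : Finset Formula) : Prop :=
  w ⊆ Φ ∧ Consistent d ↑w ∧ ∀ φ ∈ Φ, φ ∈ w ∨ simNeg φ ∈ w

/-- Kripke forcing: `rel w u v` means u →_w v, `val w p` means w ⊩ p. -/
def Forces {W : Type*} (rel : W → W → W → Prop) (val : W → ℕ → Prop) :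
    W → Formula → Prop
  | w, var p => val w p
  | _, bot => False
  | w, imp a b => Forces rel val w a → Forces rel val w b
  | w, tri a b => ∀ u v, rel w u v → Forces rel val u a →
      ∃ v', rel w u v' ∧ Forces rel val v' b

end Formula

/-- A Kripke model: a finite set of worlds, a ternary computability relation,
and a forcing relation between worlds and propositional variables. -/
structure KripkeModel where
  W : Type
  fin : Finite W
  rel : W → W → W → Prop
  val : W → ℕ → Prop

/-- A Kripke model is deterministic if for all worlds w, u there is at most
one v with u →_w v. -/
def KripkeModel.Deterministic (M : KripkeModel) : Prop :=
  ∀ w u v v', M.rel w u v → M.rel w u v' → v = v'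

/-- Forcing in a Kripke model. -/
def KripkeModel.Forces (M : KripkeModel) : M.W → Formula → Prop :=
  Formula.Forces M.rel M.val

/-- The standard enumeration of nondeterministic partial recursive functions:
ζ_w(u) = the set of possible outputs of machine (code) w on input u. -/
def zeta (w u : ℕ) : Set ℕ :=
  {v | ((Denumerable.ofNat Nat.Partrec.Code w).eval (Nat.pair u v)).Dom}

/-- The standard enumeration of deterministic partial recursive functions:
ξ_w(u) = the value of the partial recursive function with code w on input u. -/
def xi (w u : ℕ) : Part ℕ :=
  (Denumerable.ofNat Nat.Partrec.Code w).eval u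

namespace Formula

/-- Set semantics for nondeterministic partial recursive functions
(existential reading of ▷). -/
def semN (val : ℕ → Set ℕ) : Formula → Set ℕ
  | var p => val p
  | bot => ∅
  | imp a b => (Set.univ \ semN val a) ∪ semN val b
  | tri a b => {w | ∀ u ∈ semN val a, zeta w u ≠ ∅ → zeta w u ∩ semN val b ≠ ∅}

/-- Set semantics for deterministic partial recursive functions. -/
def semD (val : ℕ → Set ℕ) : Formula → Set ℕ
  | var p => val p
  | bot => ∅
  | imp a b => (Set.univ \ semD val a) ∪ semD val b
  | tri a b => {w | ∀ u ∈ semD val a, ∀ h : (xi w u).Dom, (xi w u).get h ∈ semD val b}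

/-- Universal set semantics for nondeterministic partial recursive functions:
every terminating computation path from φ* ends in ψ*. -/
def semU (val : ℕ → Set ℕ) : Formula → Set ℕ
  | var p => val p
  | bot => ∅
  | imp a b => (Set.univ \ semU val a) ∪ semU val b
  | tri a b => {w | ∀ u ∈ semU val a, zeta w u ⊆ semU val b}

/-- A canonical injective encoding of formulas as natural numbers. -/
def enc : Formula → ℕ
  | var n => 4 * n
  | bot => 1
  | imp a b => 4 * Nat.pair (enc a) (enc b) + 2
  | tri a b => 4 * Nat.pair (enc a) (enc b) + 3

end Formula

/-!
Every theorem of ℜ is forced in every frame, however large. The ζ-semantics is forcing in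
the frame on ℕ with `u →_w v ↔ v ∈ ζ_w(u)`, so ℜ is sound for it. Conversely, Kleene's
recursion theorem yields, for a finite Kripke model, one program per world whose
nondeterministic computations follow the accessibility relation. The model then embeds into
the ζ-frame, so a ζ-tautology is forced in every finite model. Completeness with respect to
finite models comes from a canonical model: its worlds are maximal consistent subsets of a finite
closure of `φ`, copied once for each formula that they have to refute.
-/

namespace Formula

structure IsBoolVal (v : Formula → Bool) : Prop where
  map_bot : v bot = false
  map_imp : ∀ a b, v (imp a b) = (!(v a) || v b)

lemma isPropTaut_iff {φ : Formula} : IsPropTaut φ ↔ ∀ v, IsBoolVal v → v φ = true :=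
  ⟨fun h v hv => h v hv.map_bot hv.map_imp, fun h v h0 h1 => h v ⟨h0, h1⟩⟩

lemma simNeg_cases (ψ : Formula) :
    (∃ a, ψ = neg a ∧ simNeg ψ = a) ∨ simNeg ψ = neg ψ := by
  rcases ψ with _ | _ | ⟨a, _ | _ | _ | _⟩ | _
  all_goals first | exact .inl ⟨a, rfl, rfl⟩ | exact .inr rfl

namespace IsBoolVal

variable {v : Formula → Bool}

lemma map_neg (hv : IsBoolVal v) (a : Formula) : v (neg a) = !(v a) := by
  simp [neg, hv.map_imp, hv.map_bot]

lemma map_top (hv : IsBoolVal v) : v top = true := by simp [top, hv.map_neg, hv.map_bot]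

lemma map_conj (hv : IsBoolVal v) (a b : Formula) : v (conj a b) = (v a && v b) := by
  simp [conj, hv.map_imp, hv.map_neg]

lemma map_disj (hv : IsBoolVal v) (a b : Formula) : v (disj a b) = (v a || v b) := by
  simp [disj, hv.map_imp, hv.map_neg]

lemma map_simNeg (hv : IsBoolVal v) (a : Formula) : v (simNeg a) = !(v a) := by
  rcases simNeg_cases a with ⟨b, rfl, hb⟩ | hb <;> simp [hb, hv.map_neg]

lemma map_bigConj (hv : IsBoolVal v) (Δ : Finset Formula) :
    v (bigConj Δ) = decide (∀ x ∈ Δ, v x = true) := by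
  suffices ∀ L : List Formula, v (conjList L) = L.all v by simp [bigConj, this, List.all_eq]
  intro L
  induction L with
  | nil => exact hv.map_top
  | cons a L ih => simp [conjList, hv.map_conj, ih]

end IsBoolVal

variable {d : Bool}

lemma Prv.of_taut {a b : Formula} (h : IsPropTaut (imp a b)) (ha : Prv d a) : Prv d b :=
  .mp (.taut h) ha

lemma Prv.imp_refl (a : Formula) : Prv d (imp a a) :=
  .taut <| isPropTaut_iff.2 fun v hv => by simp only [hv.map_imp]; grind

lemma Prv.bigConj_imp_of_mem {Γ : Finset Formula} {a : Formula} (h : a ∈ Γ) :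
    Prv d (imp (bigConj Γ) a) :=
  .taut <| isPropTaut_iff.2 fun v hv => by simp only [hv.map_imp, hv.map_bigConj]; grind

lemma Prv.of_deriv_empty {φ : Formula} (h : Deriv d ∅ φ) : Prv d φ := by
  induction h with
  | hyp h => exact absurd h (Set.notMem_empty _)
  | thm h => exact h
  | mp _ _ ih₁ ih₂ => exact .mp ih₁ ih₂

namespace Deriv

variable {Δ : Set Formula}

lemma of_taut {a b : Formula} (h : IsPropTaut (imp a b)) (ha : Deriv d Δ a) : Deriv d Δ b :=
  .mp (.thm (.taut h)) ha

lemma of_taut₂ {a b c : Formula} (h : IsPropTaut (imp a (imp b c)))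
    (ha : Deriv d Δ a) (hb : Deriv d Δ b) : Deriv d Δ c :=
  .mp (.mp (.thm (.taut h)) ha) hb

lemma bot_of_simNeg {ψ : Formula} (h : Deriv d Δ ψ) (h' : Deriv d Δ (simNeg ψ)) :
    Deriv d Δ bot :=
  of_taut₂ (isPropTaut_iff.2 fun v hv => by
    simp only [hv.map_imp, hv.map_simNeg, hv.map_bot]; grind) h h'

lemma tri_of_imp {a a' b b' : Formula} (ha : Prv d (imp a' a)) (hb : Prv d (imp b b'))
    (h : Deriv d Δ (tri a b)) : Deriv d Δ (tri a' b') :=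
  .mp (.thm (.mono ha hb)) h

lemma imp_intro {ψ φ : Formula} (h : Deriv d (insert ψ Δ) φ) : Deriv d Δ (imp ψ φ) := by
  have weaken {φ : Formula} (h : Deriv d Δ φ) : Deriv d Δ (imp ψ φ) :=
    of_taut (isPropTaut_iff.2 fun v hv => by simp only [hv.map_imp]; grind) h
  induction h with
  | hyp hφ =>
    rcases hφ with rfl | hφ
    exacts [.thm (Prv.imp_refl _), weaken (.hyp hφ)]
  | thm hφ => exact weaken (.thm hφ)
  | mp _ _ ih₁ ih₂ =>
    exact of_taut₂ (isPropTaut_iff.2 fun v hv => by simp only [hv.map_imp]; grind) ih₁ ih₂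

lemma prv_imp_bigConj {Γ : Finset Formula} {φ : Formula} (h : Deriv d ↑Γ φ) :
    Prv d (imp (bigConj Γ) φ) := by
  induction Γ using Finset.induction_on generalizing φ with
  | empty =>
    refine Prv.of_taut (isPropTaut_iff.2 fun v hv => ?_) (Prv.of_deriv_empty (by simpa using h))
    simp only [hv.map_imp, hv.map_bigConj]; grind
  | insert a Γ _ ih =>
    rw [Finset.coe_insert] at h
    refine Prv.of_taut (isPropTaut_iff.2 fun v hv => ?_) (ih (imp_intro h))
    simp only [hv.map_imp, hv.map_bigConj]; grind

end Deriv

lemma Consistent.insert_or_insert_simNeg {Γ : Finset Formula} (h : Consistent d ↑Γ)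
    (ψ : Formula) :
    Consistent d ↑(insert ψ Γ) ∨ Consistent d ↑(insert (simNeg ψ) Γ) := by
  by_contra! hboth
  obtain ⟨h₁, h₂⟩ := hboth
  simp only [Consistent, not_not, Finset.coe_insert] at h₁ h₂
  refine h (Deriv.of_taut₂ (isPropTaut_iff.2 fun v hv => ?_) h₁.imp_intro h₂.imp_intro)
  simp only [hv.map_imp, hv.map_simNeg, hv.map_bot]; grind

/-- Lindenbaum's lemma, relative to a property `P` of finite sets: a largest extension of `Δ`
inside `Φ` that satisfies `P` has to decide every formula of `Φ`. -/
lemma exists_maxCons_of_split {Φ Δ : Finset Formula} (P : Finset Formula → Prop)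
    (hcons : ∀ Γ, P Γ → Consistent d ↑Γ)
    (hsplit : ∀ Γ ψ, P Γ → P (insert ψ Γ) ∨ P (insert (simNeg ψ) Γ))
    (hΦ : SimClosed Φ) (hΔ : Δ ⊆ Φ) (hP : P Δ) :
    ∃ w, MaxCons d Φ w ∧ Δ ⊆ w ∧ P w := by
  classical
  set S := Φ.powerset.filter fun w => Δ ⊆ w ∧ P w
  have hΔS : Δ ∈ S := by simp [S, hΔ, hP]
  obtain ⟨w, hwS, hmax⟩ := S.exists_max_image Finset.card ⟨Δ, hΔS⟩
  simp only [S, Finset.mem_filter, Finset.mem_powerset] at hwS hmax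
  obtain ⟨hwΦ, hΔw, hPw⟩ := hwS
  refine ⟨w, ⟨hwΦ, hcons w hPw, fun ψ hψ => ?_⟩, hΔw, hPw⟩
  by_contra! hnone
  obtain ⟨χ, hχΦ, hχw, hPχ⟩ : ∃ χ ∈ Φ, χ ∉ w ∧ P (insert χ w) := by
    rcases hsplit w ψ hPw with h | h
    exacts [⟨ψ, hψ, hnone.1, h⟩, ⟨simNeg ψ, hΦ ψ hψ, hnone.2, h⟩]
  have := hmax (insert χ w)
    ⟨Finset.insert_subset hχΦ hwΦ, hΔw.trans (Finset.subset_insert _ _), hPχ⟩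
  rw [Finset.card_insert_of_notMem hχw] at this
  omega

namespace MaxCons

variable {Φ w : Finset Formula}

lemma consistent (hw : MaxCons d Φ w) : Consistent d ↑w := hw.2.1

lemma mem_or_simNeg_mem (hw : MaxCons d Φ w) {ψ : Formula} (hψ : ψ ∈ Φ) :
    ψ ∈ w ∨ simNeg ψ ∈ w :=
  hw.2.2 ψ hψ

lemma simNeg_not_mem (hw : MaxCons d Φ w) {ψ : Formula} (hψ : ψ ∈ w) : simNeg ψ ∉ w :=
  fun hψ' => hw.consistent ((Deriv.hyp hψ).bot_of_simNeg (.hyp hψ'))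

lemma bot_not_mem (hw : MaxCons d Φ w) : bot ∉ w :=
  fun h => hw.consistent (.hyp h)

lemma mem_iff_deriv (hw : MaxCons d Φ w) {ψ : Formula} (hψ : ψ ∈ Φ) :
    ψ ∈ w ↔ Deriv d ↑w ψ :=
  ⟨.hyp, fun h => (hw.mem_or_simNeg_mem hψ).resolve_right fun h' =>
    hw.consistent (h.bot_of_simNeg (.hyp h'))⟩

lemma imp_mem_iff (hw : MaxCons d Φ w) {a b : Formula} (hab : imp a b ∈ Φ) (ha : a ∈ Φ)
    (hb : b ∈ Φ) : imp a b ∈ w ↔ (a ∈ w → b ∈ w) := by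
  rw [hw.mem_iff_deriv hab]
  refine ⟨fun h ha' => (hw.mem_iff_deriv hb).2 (.mp h (.hyp ha')), fun h => ?_⟩
  rcases hw.mem_or_simNeg_mem ha with ha' | ha'
  · exact Deriv.of_taut (isPropTaut_iff.2 fun v hv => by simp only [hv.map_imp]; grind)
      (.hyp (h ha'))
  · exact Deriv.of_taut (isPropTaut_iff.2 fun v hv => by
      simp only [hv.map_imp, hv.map_simNeg]; grind) (.hyp ha')

end MaxCons

variable {Φ : Finset Formula}

lemma exists_maxCons_mem_not_mem (hΦ : SimClosed Φ) {b c : Formula} (hc : c ∈ Φ) (hb : b ∈ Φ)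
    (hcb : ¬ Prv d (imp c b)) : ∃ v, MaxCons d Φ v ∧ c ∈ v ∧ b ∉ v := by
  have hcons : Consistent d ↑({c, simNeg b} : Finset Formula) := fun h =>
    hcb <| Prv.of_taut (isPropTaut_iff.2 fun v hv => by
      simp only [hv.map_imp, hv.map_bigConj, Finset.forall_mem_insert,
        Finset.mem_singleton, forall_eq, hv.map_simNeg, hv.map_bot]; grind) h.prv_imp_bigConj
  obtain ⟨v, hv, hsub, -⟩ := exists_maxCons_of_split (fun Δ : Finset Formula => Consistent d ↑Δ)
    (fun _ h => h) (fun _ ψ h => h.insert_or_insert_simNeg ψ) hΦ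
    (Finset.insert_subset hc (Finset.singleton_subset_iff.2 (hΦ b hb))) hcons
  exact ⟨v, hv, hsub (by simp), fun hbv => hv.simNeg_not_mem hbv (hsub (by simp))⟩

lemma exists_maxCons_not_deriv_tri (hΦ : SimClosed Φ) {Γ : Set Formula} {a b : Formula}
    (ha : a ∈ Φ) (h : ¬ Deriv d Γ (tri a b)) :
    ∃ u, MaxCons d Φ u ∧ a ∈ u ∧ ¬ Deriv d Γ (tri (bigConj u) b) := by
  have hcons (Δ : Finset Formula) (hΔ : ¬ Deriv d Γ (tri (bigConj Δ) b)) :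
      Consistent d ↑Δ := fun hbot =>
    hΔ <| (Deriv.thm (Prv.a2 b)).tri_of_imp hbot.prv_imp_bigConj (Prv.imp_refl b)
  have hsplit (Δ : Finset Formula) (ψ : Formula) (hΔ : ¬ Deriv d Γ (tri (bigConj Δ) b)) :
      ¬ Deriv d Γ (tri (bigConj (insert ψ Δ)) b) ∨
        ¬ Deriv d Γ (tri (bigConj (insert (simNeg ψ) Δ)) b) := by
    by_contra! hboth
    refine hΔ <| (Deriv.mp (.mp (.thm (Prv.a1 _ b _)) hboth.1) hboth.2).tri_of_imp
      (.taut <| isPropTaut_iff.2 fun v hv => ?_) (Prv.imp_refl b)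
    simp only [hv.map_imp, hv.map_bigConj, Finset.forall_mem_insert, hv.map_simNeg, hv.map_disj]
    grind
  have hsingle : ¬ Deriv d Γ (tri (bigConj {a}) b) := fun h' =>
    h <| h'.tri_of_imp (.taut <| isPropTaut_iff.2 fun v hv => by
      simp only [hv.map_imp, hv.map_bigConj]; grind) (Prv.imp_refl b)
  obtain ⟨u, hu, hsub, hPu⟩ := exists_maxCons_of_split _ hcons hsplit hΦ
    (Finset.singleton_subset_iff.2 ha) hsingle
  exact ⟨u, hu, hsub (Finset.mem_singleton_self a), hPu⟩

def subformulas : Formula → Finset Formula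
  | var n => {var n}
  | bot => {bot}
  | imp a b => insert (imp a b) (subformulas a ∪ subformulas b)
  | tri a b => insert (tri a b) (subformulas a ∪ subformulas b)

lemma mem_subformulas_self (φ : Formula) : φ ∈ subformulas φ := by
  cases φ <;> simp [subformulas]

lemma subClosed_subformulas (φ : Formula) : SubClosed (subformulas φ) := by
  induction φ with
  | var n => constructor <;> simp [subformulas]
  | bot => constructor <;> simp [subformulas]
  | imp c e ihc ihe =>
    constructor <;> intro a b h <;> simp only [subformulas, Finset.mem_insert, Finset.mem_union,
      imp.injEq, reduceCtorEq, false_or] at h ⊢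
    · rcases h with ⟨rfl, rfl⟩ | h | h
      · simp [mem_subformulas_self]
      · simp [ihc.1 a b h]
      · simp [ihe.1 a b h]
    · rcases h with h | h
      · simp [ihc.2 a b h]
      · simp [ihe.2 a b h]
  | tri c e ihc ihe =>
    constructor <;> intro a b h <;> simp only [subformulas, Finset.mem_insert, Finset.mem_union,
      tri.injEq, reduceCtorEq, false_or] at h ⊢
    · rcases h with h | h
      · simp [ihc.1 a b h]
      · simp [ihe.1 a b h]
    · rcases h with ⟨rfl, rfl⟩ | h | h
      · simp [mem_subformulas_self]
      · simp [ihc.2 a b h]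
      · simp [ihe.2 a b h]

section

variable {T : Finset Formula}

lemma subClosed_union_image_neg (hT : SubClosed T) (hbot : bot ∈ T) :
    SubClosed (T ∪ T.image neg) := by
  constructor <;> intro a b h <;> simp only [Finset.mem_union, Finset.mem_image] at h ⊢
  · rcases h with h | ⟨c, hc, hcab⟩
    · exact ⟨.inl (hT.1 a b h).1, .inl (hT.1 a b h).2⟩
    · obtain ⟨rfl, rfl⟩ := imp.inj hcab
      exact ⟨.inl hc, .inl hbot⟩
  · rcases h with h | ⟨c, -, hc⟩
    · exact ⟨.inl (hT.2 a b h).1, .inl (hT.2 a b h).2⟩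
    · exact absurd hc (by simp [neg])

lemma simClosed_union_image_neg (hT : SubClosed T) : SimClosed (T ∪ T.image neg) := by
  intro ψ h
  simp only [Finset.mem_union, Finset.mem_image] at h ⊢
  rcases h with h | ⟨c, hc, rfl⟩
  · rcases simNeg_cases ψ with ⟨a, rfl, ha⟩ | ha
    · exact .inl (ha ▸ (hT.1 a bot h).1)
    · exact .inr ⟨ψ, h, ha.symm⟩
  · exact .inl hc

end

/-- The detour through `φ → ⊤` puts `⊤` and `⊥` into the set. -/
def subNegClosure (φ : Formula) : Finset Formula :=
  subformulas (imp φ top) ∪ (subformulas (imp φ top)).image neg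

lemma subClosed_subNegClosure (φ : Formula) : SubClosed (subNegClosure φ) :=
  subClosed_union_image_neg (subClosed_subformulas _) (by simp [subformulas, top, neg])

lemma simClosed_subNegClosure (φ : Formula) : SimClosed (subNegClosure φ) :=
  simClosed_union_image_neg (subClosed_subformulas _)

lemma mem_subNegClosure_self (φ : Formula) : φ ∈ subNegClosure φ := by
  simp [subNegClosure, subformulas, mem_subformulas_self]

lemma top_mem_subNegClosure (φ : Formula) : top ∈ subNegClosure φ := by
  simp [subNegClosure, subformulas, mem_subformulas_self]

/-- The tag `b` of a world `u` is the formula that `u` is meant to refute: in the canonical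
model `u →_w v` iff `w ⊬ ⋀u ▷ b` and `b ∉ v`. -/
def CanonicalWorld (d : Bool) (Φ : Finset Formula) : Type :=
  {u : Finset Formula // MaxCons d Φ u} × Option Φ

instance (d : Bool) (Φ : Finset Formula) : Finite (CanonicalWorld d Φ) := by
  have : Finite {u : Finset Formula // MaxCons d Φ u} :=
    .of_injective (β := Φ.powerset) (fun u => ⟨u.1, Finset.mem_powerset.2 u.2.1⟩)
      fun _ _ h => Subtype.ext (Subtype.mk.inj h)
  exact inferInstanceAs (Finite (_ × _))

def canonicalModel (d : Bool) (Φ : Finset Formula) : KripkeModel where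
  W := CanonicalWorld d Φ
  fin := inferInstance
  rel w u v := ∃ b : Φ, u.2 = some b ∧ ¬ Deriv d ↑w.1.1 (tri (bigConj u.1.1) b) ∧ b.1 ∉ v.1.1
  val w p := var p ∈ w.1.1

lemma canonicalModel_forces_iff (hsub : SubClosed Φ) (hsim : SimClosed Φ) (htop : top ∈ Φ)
    {ψ : Formula} (hψ : ψ ∈ Φ) (x : (canonicalModel d Φ).W) :
    (canonicalModel d Φ).Forces x ψ ↔ ψ ∈ x.1.1 := by
  induction ψ generalizing x with
  | var p => rfl
  | bot => exact iff_of_false id x.1.2.bot_not_mem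
  | imp a b iha ihb =>
    obtain ⟨ha, hb⟩ := hsub.1 a b hψ
    rw [x.1.2.imp_mem_iff hψ ha hb, ← iha ha, ← ihb hb]
    rfl
  | tri a b iha ihb =>
    obtain ⟨ha, hb⟩ := hsub.2 a b hψ
    have ihb' (v) := ihb hb v
    simp only [KripkeModel.Forces, canonicalModel] at iha ihb' ⊢
    constructor
    · intro hF
      by_contra hab
      obtain ⟨u, hu, hau, hub⟩ :=
        exists_maxCons_not_deriv_tri hsim ha fun h => hab ((x.1.2.mem_iff_deriv hψ).2 h)
      obtain ⟨v, hv, -, hbv⟩ := exists_maxCons_mem_not_mem hsim htop hb fun h =>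
        hub <| (Deriv.thm (Prv.a3 (bigConj u))).tri_of_imp (Prv.imp_refl _) h
      obtain ⟨v', ⟨b', hb', -, hbv'⟩, hv'⟩ :=
        hF (⟨u, hu⟩, some ⟨b, hb⟩) (⟨v, hv⟩, none) ⟨⟨b, hb⟩, rfl, hub, hbv⟩
          ((iha ha _).2 hau)
      cases Option.some_injective _ hb'
      exact hbv' ((ihb' v').1 hv')
    · rintro hab u v ⟨b₀, hb₀, hub₀, -⟩ hau
      have hub : Deriv d ↑x.1.1 (tri (bigConj u.1.1) b) :=
        (Deriv.hyp hab).tri_of_imp (.bigConj_imp_of_mem ((iha ha u).1 hau)) (Prv.imp_refl b)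
      obtain ⟨v', hv', hbv', hb₀v'⟩ := exists_maxCons_mem_not_mem hsim hb b₀.2
        fun h => hub₀ (hub.tri_of_imp (Prv.imp_refl _) h)
      exact ⟨(⟨v', hv'⟩, none), ⟨b₀, hb₀, hub₀, hb₀v'⟩, (ihb' _).2 hbv'⟩

theorem Prv.of_forall_forces {φ : Formula}
    (h : ∀ (M : KripkeModel) (w : M.W), M.Forces w φ) : Prv d φ := by
  by_contra hφ
  have hprv_top : Prv d top := .taut <| isPropTaut_iff.2 fun _ hv => hv.map_top
  obtain ⟨v, hv, -, hφv⟩ := exists_maxCons_mem_not_mem (simClosed_subNegClosure φ)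
    (top_mem_subNegClosure φ) (mem_subNegClosure_self φ) fun h => hφ (h.mp hprv_top)
  exact hφv <| (canonicalModel_forces_iff (subClosed_subNegClosure φ)
    (simClosed_subNegClosure φ) (top_mem_subNegClosure φ) (mem_subNegClosure_self φ)
    (⟨v, hv⟩, none)).1 (h _ _)

section Frames

variable {W : Type*} {rel : W → W → W → Prop} {val : W → ℕ → Prop}

lemma IsPropTaut.forces {φ : Formula} (h : IsPropTaut φ) (w : W) : Forces rel val w φ := by
  classical
  have hv : IsBoolVal fun ψ => decide (Forces rel val w ψ) :=
    ⟨decide_eq_false id, fun a b => by simp [Forces, imp_iff_not_or]⟩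
  simpa using isPropTaut_iff.1 h _ hv

lemma Prv.forces {φ : Formula} (h : Prv false φ) (w : W) : Forces rel val w φ := by
  generalize hd : false = d at h
  induction h generalizing w with
  | taut h => exact h.forces w
  | a1 a b c =>
    intro h₁ h₂ u v huv hu
    by_cases ha : Forces rel val u a
    · exact h₁ u v huv ha
    · exact h₂ u v huv (hu ha)
  | a2 a => exact fun _ _ _ h => h.elim
  | a3 a => exact fun _ v huv _ => ⟨v, huv, id⟩
  | a4 => cases hd
  | mp _ _ ih₁ ih₂ => exact ih₁ w hd (ih₂ w hd)
  | mono _ _ ih₁ ih₂ =>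
    intro h u v huv hu
    obtain ⟨v', huv', hv'⟩ := h u v huv (ih₁ u hd hu)
    exact ⟨v', huv', ih₂ v' hd hv'⟩

lemma forces_iff_of_embedding {W' : Type*} {rel' : W' → W' → W' → Prop}
    {val' : W' → ℕ → Prop} (f : W → W') (hf : Function.Injective f)
    (hrel : ∀ w x y, rel' (f w) x y ↔ ∃ u v, rel w u v ∧ x = f u ∧ y = f v)
    (hval : ∀ w p, val' (f w) p ↔ val w p) (φ : Formula) (w : W) :
    Forces rel' val' (f w) φ ↔ Forces rel val w φ := by
  induction φ generalizing w with
  | var p => exact hval w p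
  | bot => rfl
  | imp a b iha ihb => simp only [Forces, iha, ihb]
  | tri a b iha ihb =>
    simp only [Forces]
    constructor
    · intro h u v huv hu
      obtain ⟨y, hy, hby⟩ := h (f u) (f v) ((hrel _ _ _).2 ⟨u, v, huv, rfl, rfl⟩) ((iha u).2 hu)
      obtain ⟨u', v', huv', hu', rfl⟩ := (hrel _ _ _).1 hy
      cases hf hu'
      exact ⟨v', huv', (ihb v').1 hby⟩
    · intro h x y hxy hx
      obtain ⟨u, v, huv, rfl, rfl⟩ := (hrel _ _ _).1 hxy
      obtain ⟨v', huv', hv'⟩ := h u v huv ((iha u).1 hx)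
      exact ⟨f v', (hrel _ _ _).2 ⟨u, v', huv', rfl, rfl⟩, (ihb v').2 hv'⟩

end Frames

lemma mem_semN_iff_forces (val : ℕ → Set ℕ) (φ : Formula) (w : ℕ) :
    w ∈ semN val φ ↔ Forces (fun w u v => v ∈ zeta w u) (fun w p => w ∈ val p) w φ := by
  induction φ generalizing w with
  | var p => rfl
  | bot => simp [semN, Forces]
  | imp a b iha ihb =>
    simp only [semN, Forces, Set.mem_union, Set.mem_sdiff, Set.mem_univ, true_and, ← iha, ← ihb]
    tauto
  | tri a b iha ihb =>
    simp only [semN, Forces, Set.mem_ofPred_eq, ← iha, ← ihb, ← Set.nonempty_iff_ne_empty]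
    exact ⟨fun h u v hv hu => h u hu ⟨v, hv⟩, fun h u hu ⟨v, hv⟩ => h u v hv hu⟩

lemma Prv.semN_eq_univ {φ : Formula} (h : Prv false φ) (val : ℕ → Set ℕ) :
    semN val φ = Set.univ :=
  Set.eq_univ_of_forall fun w => (mem_semN_iff_forces val φ w).2 (h.forces w)

end Formula

open Nat.Partrec (Code) in
theorem exists_code_zeta_curry (T : List (ℕ × ℕ × ℕ)) :
    ∃ c : Code, ∀ i x y, y ∈ zeta (Encodable.encode (c.curry i)) x ↔
      ∃ j k, (i, j, k) ∈ T ∧ Encodable.encode (c.curry j) = x ∧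
        Encodable.encode (c.curry k) = y := by
  let code (c : Code) (t : ℕ × ℕ × ℕ) : ℕ :=
    Nat.pair t.1 (Nat.pair (Encodable.encode (c.curry t.2.1)) (Encodable.encode (c.curry t.2.2)))
  have hcode : Primrec₂ code := by
    open Primrec in
    exact Primrec₂.natPair.comp (fst.comp snd) <| Primrec₂.natPair.comp
      (Primrec.encode.comp (Nat.Partrec.Code.primrec₂_curry.comp fst (fst.comp (snd.comp snd))))
      (Primrec.encode.comp (Nat.Partrec.Code.primrec₂_curry.comp fst (snd.comp (snd.comp snd))))
  have hmem : PrimrecRel fun (c : Code) (n : ℕ) => n ∈ T.map (code c) :=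
    ((Primrec.eq (α := ℕ)).exists_mem_list.comp₂
      ((Primrec.list_map (Primrec.const T) hcode).comp₂ Primrec₂.left) Primrec₂.right).of_eq
      fun c n => by simp
  -- By the recursion theorem `c` may consult its own curried codes: on `⟨i, ⟨x, y⟩⟩` it halts
  -- iff `x = c.curry j` and `y = c.curry k` (encoded) for some `(i, j, k) ∈ T`.
  let f (c : Code) (n : ℕ) : Part ℕ := cond (decide (n ∈ T.map (code c))) (Part.some 0) Part.none
  have hf : Partrec₂ f := Partrec.cond hmem.decide.to_comp (Partrec.const' _) Partrec.none
  obtain ⟨c, hc⟩ := Nat.Partrec.Code.fixed_point₂ hf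
  refine ⟨c, fun i x y => ?_⟩
  have hdom (b : Bool) : (cond b (Part.some 0) Part.none).Dom ↔ b = true := by cases b <;> simp
  simp only [zeta, Set.mem_ofPred_eq, Denumerable.ofNat_encode, Nat.Partrec.Code.eval_curry, hc,
    f, hdom, decide_eq_true_iff]
  simp [code, Nat.pair_eq_pair]

theorem exists_injective_zeta_realization {W : Type*} [Finite W] (R : W → W → W → Prop) :
    ∃ f : W → ℕ, Function.Injective f ∧
      ∀ w x y, y ∈ zeta (f w) x ↔ ∃ u v, R w u v ∧ x = f u ∧ y = f v := by
  classical
  have := Fintype.ofFinite W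
  obtain ⟨e, he⟩ := Countable.exists_injective_nat W
  obtain ⟨c, hc⟩ := exists_code_zeta_curry <|
    (Finset.univ.filter fun t : W × W × W => R t.1 t.2.1 t.2.2).toList.map
      fun t => (e t.1, e t.2.1, e t.2.2)
  have hcode : Function.Injective fun i => Encodable.encode (c.curry i) :=
    fun i j h => (Nat.Partrec.Code.curry_inj (Encodable.encode_injective h)).2
  refine ⟨fun w => Encodable.encode (c.curry (e w)), hcode.comp he, fun w x y => ?_⟩
  rw [hc]
  constructor
  · rintro ⟨j, k, hT, rfl, rfl⟩
    simp only [List.mem_map, Finset.mem_toList, Finset.mem_filter, Finset.mem_univ, true_and,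
      Prod.mk.injEq] at hT
    obtain ⟨⟨w', u, v⟩, huv, hw', rfl, rfl⟩ := hT
    cases he hw'
    exact ⟨u, v, huv, rfl, rfl⟩
  · rintro ⟨u, v, huv, rfl, rfl⟩
    exact ⟨e u, e v, List.mem_map.2 ⟨(w, u, v), by simpa using huv, rfl⟩, rfl, rfl⟩

theorem KripkeModel.forces_of_forall_semN_eq_univ {φ : Formula}
    (h : ∀ val : ℕ → Set ℕ, Formula.semN val φ = Set.univ) (M : KripkeModel) (w : M.W) :
    M.Forces w φ := by
  have := M.fin
  obtain ⟨f, hf, hrel⟩ := exists_injective_zeta_realization M.rel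
  let val (p : ℕ) : Set ℕ := {n | ∃ w, n = f w ∧ M.val w p}
  have hval (w : M.W) (p : ℕ) : f w ∈ val p ↔ M.val w p :=
    ⟨fun ⟨_, hw, hp⟩ => hf hw ▸ hp, fun hp => ⟨w, rfl, hp⟩⟩
  refine (Formula.forces_iff_of_embedding (rel' := fun w u v => v ∈ zeta w u)
    (val' := fun n p => n ∈ val p) f hf hrel hval φ w).1 ?_
  exact (Formula.mem_semN_iff_forces val φ (f w)).1 (h val ▸ Set.mem_univ _)

open Formula in
/-- Main theorem for ℜ: for every formula φ the following are equivalent: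
(1) φ is a tautology of the standard enumeration ζ of nondeterministic
partial recursive functions; (2) φ is forced at every world of every Kripke
model; (3) φ is a theorem of ℜ. -/
theorem grand_R (φ : Formula) :
    List.TFAE [
      ∀ val : ℕ → Set ℕ, semN val φ = Set.univ,
      ∀ (M : KripkeModel) (w : M.W), M.Forces w φ,
      Prv false φ ] := by
  tfae_have 3 → 1 := Prv.semN_eq_univ
  tfae_have 1 → 2 := KripkeModel.forces_of_forall_semN_eq_univ
  tfae_have 2 → 3 := Prv.of_forall_forces
  tfae_finish
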